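/- Let A be a separable C*-algebra whose set of tracial states is nonempty and compact (in the weak-* topology), and suppose A satisfies uniform property Γ. Then for every k ∈ ℕ, the matrix algebra M_k(A) of k×k matrices over A (with its C*-norm) also satisfies uniform property Γ (with respect to the tracial states of M_k(A)). -/

import Mathlib

/-!
Take `eᵢ = diag(gᵢ, …, gᵢ)`, where the `gᵢ` witness uniform property Γ of `A` for all matrix
entries of the elements of `F`. The entries of the commutator `eᵢ a - a eᵢ` are the commutators
`gᵢ a_pq - a_pq gᵢ`, so it is small. A tracial functional `τ` on `M_k(A)` vanishes on the
off-diagonal matrix units `x E_pq`: for a product, `τ(xy E_pq) = τ(x E_pq · y E_qq) =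
τ(y E_qq · x E_pq) = 0`, and products span a C*-algebra. Hence `τ(M) = ∑ₚ τₚ(M_pp)` with
`τₚ = τ(· E_pp)`, and each `τₚ` is a positive tracial functional of norm at most one, i.e. a
multiple `t θ` of a tracial state `θ` of `A` with `0 ≤ t ≤ 1`, to which the trace estimate for
the `gᵢ` applies.
-/

open scoped ComplexOrder

def IsTracialState {A : Type*} [NonUnitalCStarAlgebra A] (τ : A →L[ℂ] ℂ) : Prop :=
  ‖τ‖ = 1 ∧ (∀ a : A, 0 ≤ τ (star a * a)) ∧ ∀ a b : A, τ (a * b) = τ (b * a)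

def IsPositiveElem {A : Type*} [NonUnitalCStarAlgebra A] (a : A) : Prop := ∃ b, a = star b * b

def UniformPropertyGamma (A : Type*) [NonUnitalCStarAlgebra A] : Prop :=
  ∀ (F : Finset A) (ε : ℝ), 0 < ε → ∀ n : ℕ, 0 < n →
    ∃ e : Fin n → A,
      (∀ i, IsPositiveElem (e i) ∧ ‖e i‖ ≤ 1) ∧
      (∀ i j, i ≠ j → e i * e j = 0) ∧
      ∀ i, ∀ a ∈ F, ‖e i * a - a * e i‖ < ε ∧
        ∀ τ : A →L[ℂ] ℂ, IsTracialState τ → ‖τ (a * e i) - (1 / (n : ℂ)) * τ a‖ < ε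

def IsSimpleCStarAlgebra (A : Type*) [NonUnitalCStarAlgebra A] : Prop :=
  ∀ I : TwoSidedIdeal A, IsClosed (I : Set A) → (I : Set A) = {0} ∨ (I : Set A) = Set.univ

def CuntzSubeqIn {A : Type*} [NonUnitalCStarAlgebra A] (S : Set A) (a b : A) : Prop :=
  ∃ r : ℕ → A, (∀ k, r k ∈ S) ∧
    Filter.Tendsto (fun k => ‖star (r k) * b * r k - a‖) Filter.atTop (nhds 0)

def CuntzSubeq {A : Type*} [NonUnitalCStarAlgebra A] (a b : A) : Prop :=
  CuntzSubeqIn Set.univ a b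

variable {G A : Type*} [Monoid G] [CStarAlgebra A]

def fixedPointAlgebra (α : G →* (A ≃ₐ[ℂ] A))
    (hstar : ∀ g (a : A), α g (star a) = star (α g a)) : StarSubalgebra ℂ A where
  carrier := {a | ∀ g, α g a = a}
  mul_mem' := fun {a b} ha hb g => by rw [map_mul, ha g, hb g]
  add_mem' := fun {a b} ha hb g => by rw [map_add, ha g, hb g]
  algebraMap_mem' := fun c g => (α g).commutes c
  star_mem' := fun {a} ha g => by rw [hstar g a, ha g]

theorem isClosed_fixedPointAlgebra (α : G →* (A ≃ₐ[ℂ] A))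
    (hstar : ∀ g (a : A), α g (star a) = star (α g a)) :
    IsClosed ((fixedPointAlgebra α hstar : StarSubalgebra ℂ A) : Set A) := by
  have h : ((fixedPointAlgebra α hstar : StarSubalgebra ℂ A) : Set A)
      = ⋂ g, {a : A | α g a = a} := by
    ext a; simp [fixedPointAlgebra, Set.mem_iInter]
  rw [h]
  refine isClosed_iInter fun g => ?_
  let φ : A ≃⋆ₐ[ℂ] A :=
    { (α g).toRingEquiv with
      map_star' := hstar g
      map_smul' := fun c a => map_smul (α g) c a }
  have hcont : Continuous fun a : A => α g a :=
    (NonUnitalStarAlgHom.isometry φ φ.injective).continuous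
  exact isClosed_eq hcont continuous_id

/-- The set of tracial states of `A`, as a subset of the weak-* dual of `A`. -/
def TracialStateSet (A : Type*) [NonUnitalCStarAlgebra A] : Set (WeakDual ℂ A) :=
  {τ | IsTracialState (WeakDual.toStrongDual τ)}

def IsUniformGammaFamily {A : Type*} [NonUnitalCStarAlgebra A] {n : ℕ} (F : Finset A) (ε : ℝ)
    (e : Fin n → A) : Prop :=
  (∀ i, IsPositiveElem (e i) ∧ ‖e i‖ ≤ 1) ∧
    (∀ i j, i ≠ j → e i * e j = 0) ∧
    ∀ i, ∀ a ∈ F, ‖e i * a - a * e i‖ < ε ∧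
      ∀ τ : A →L[ℂ] ℂ, IsTracialState τ → ‖τ (a * e i) - (1 / (n : ℂ)) * τ a‖ < ε

lemma uniformPropertyGamma_iff {A : Type*} [NonUnitalCStarAlgebra A] :
    UniformPropertyGamma A ↔ ∀ (F : Finset A) (ε : ℝ), 0 < ε → ∀ n : ℕ, 0 < n →
      ∃ e : Fin n → A, IsUniformGammaFamily F ε e :=
  Iff.rfl

namespace Matrix

variable {n α : Type*} [DecidableEq n]

lemma star_single [AddMonoid α] [StarAddMonoid α] (i j : n) (a : α) :
    star (single i j a) = single j i (star a) := by
  rw [star_eq_conjTranspose, conjTranspose_single]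

variable [Fintype n] (R : Type*) [Monoid R] [NonUnitalNonAssocSemiring α] [StarRing α]
  [DistribMulAction R α]

def singleNonUnitalStarAlgHom (i : n) : α →⋆ₙₐ[R] Matrix n n α where
  toFun := single i i
  map_smul' c x := (smul_single c i i x).symm
  map_zero' := single_zero i i
  map_add' := single_add i i
  map_mul' x y := (single_mul_single_same x i i i y).symm
  map_star' x := (star_single i i x).symm

def diagonalConstNonUnitalStarAlgHom : α →⋆ₙₐ[R] Matrix n n α where
  toFun x := diagonal fun _ => x
  map_smul' c x := diagonal_smul c fun _ => x
  map_zero' := diagonal_zero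
  map_add' _ _ := (diagonal_add _ _).symm
  map_mul' _ _ := (diagonal_mul_diagonal _ _).symm
  map_star' _ := (diagonal_conjTranspose _).symm

end Matrix

section

variable {A B : Type*} [NonUnitalCStarAlgebra A] [NonUnitalCStarAlgebra B]

lemma CStarAlgebra.linearMap_eq_zero_of_map_mul {M : Type*} [AddCommGroup M] [Module ℂ M]
    (f : A →ₗ[ℂ] M) (h : ∀ x y, f (x * y) = 0) : f = 0 := by
  let _ := CStarAlgebra.spectralOrder A
  have _ := CStarAlgebra.spectralOrderedRing A
  refine LinearMap.ext_on CStarAlgebra.span_nonneg fun a (ha : 0 ≤ a) => ?_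
  obtain ⟨b, rfl⟩ := CStarAlgebra.nonneg_iff_eq_star_mul_self.mp ha
  exact h _ _

lemma exists_isTracialState_eq_norm_smul {φ : A →L[ℂ] ℂ} (hφ : φ ≠ 0)
    (hpos : ∀ a, 0 ≤ φ (star a * a)) (htr : ∀ a b, φ (a * b) = φ (b * a)) :
    ∃ θ, IsTracialState θ ∧ φ = (‖φ‖ : ℂ) • θ := by
  have hnorm : 0 < ‖φ‖ := norm_pos_iff.mpr hφ
  refine ⟨(‖φ‖⁻¹ : ℂ) • φ, ⟨?_, fun a => ?_, fun a b => ?_⟩, ?_⟩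
  · rw [norm_smul, norm_inv, Complex.norm_real, norm_norm, inv_mul_cancel₀ hnorm.ne']
  · exact mul_nonneg (by positivity) (hpos a)
  · simp only [smul_apply, htr]
  · rw [smul_smul, mul_inv_cancel₀ (by exact_mod_cast hnorm.ne'), one_smul]

lemma norm_sub_lt_of_forall_isTracialState {φ : A →L[ℂ] ℂ} (hφ : ‖φ‖ ≤ 1)
    (hpos : ∀ a, 0 ≤ φ (star a * a)) (htr : ∀ a b, φ (a * b) = φ (b * a))
    {x y : A} {c : ℂ} {ε : ℝ} (hε : 0 < ε)
    (h : ∀ θ : A →L[ℂ] ℂ, IsTracialState θ → ‖θ x - c * θ y‖ < ε) :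
    ‖φ x - c * φ y‖ < ε := by
  rcases eq_or_ne φ 0 with rfl | hφ0
  · simpa using hε
  obtain ⟨θ, hθ, hφθ⟩ := exists_isTracialState_eq_norm_smul hφ0 hpos htr
  have hnorm : 0 < ‖φ‖ := norm_pos_iff.mpr hφ0
  calc ‖φ x - c * φ y‖ = ‖φ‖ * ‖θ x - c * θ y‖ := by
        conv_lhs => rw [hφθ]
        rw [smul_apply, smul_apply, smul_eq_mul, smul_eq_mul, mul_left_comm, ← mul_sub,
          norm_mul, Complex.norm_real, norm_norm]
    _ < ‖φ‖ * ε := mul_lt_mul_of_pos_left (h θ hθ) hnorm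
    _ ≤ ε := mul_le_of_le_one_left hε.le hφ

lemma IsTracialState.norm_map_sub_lt {τ : B →L[ℂ] ℂ} (hτ : IsTracialState τ)
    (ψ : A →⋆ₙₐ[ℂ] B) {x y : A} {c : ℂ} {ε : ℝ} (hε : 0 < ε)
    (h : ∀ θ : A →L[ℂ] ℂ, IsTracialState θ → ‖θ x - c * θ y‖ < ε) :
    ‖τ (ψ x) - c * τ (ψ y)‖ < ε := by
  let φ : A →L[ℂ] ℂ := LinearMap.mkContinuous ((τ : B →ₗ[ℂ] ℂ) ∘ₗ (ψ : A →ₗ[ℂ] B)) 1 fun a =>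
    calc ‖τ (ψ a)‖ ≤ ‖τ‖ * ‖ψ a‖ := τ.le_opNorm _
      _ ≤ 1 * ‖a‖ := by rw [hτ.1]; gcongr; exact NonUnitalStarAlgHom.norm_apply_le ψ a
  refine norm_sub_lt_of_forall_isTracialState (φ := φ)
    (LinearMap.mkContinuous_norm_le _ zero_le_one _) (fun a => ?_) (fun a b => ?_) hε h
  · change 0 ≤ τ (ψ (star a * a))
    rw [map_mul, map_star]
    exact hτ.2.1 (ψ a)
  · change τ (ψ (a * b)) = τ (ψ (b * a))
    rw [map_mul ψ, map_mul ψ]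
    exact hτ.2.2 (ψ a) (ψ b)

end

section

open Matrix

variable {A B ι : Type*} [NonUnitalCStarAlgebra A] [NonUnitalCStarAlgebra B]
  [Fintype ι] [DecidableEq ι] (e : B ≃⋆ₐ[ℂ] Matrix ι ι A)

lemma norm_symm_single_le (i j : ι) (x : A) : ‖e.symm (single i j x)‖ ≤ ‖x‖ := by
  have h : star (e.symm (single i j x)) * e.symm (single i j x)
      = (e.symm : Matrix ι ι A →⋆ₙₐ[ℂ] B).comp (singleNonUnitalStarAlgHom ℂ j) (star x * x) := by
    simp [← map_star, ← map_mul, star_single, singleNonUnitalStarAlgHom]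
  have h2 := NonUnitalStarAlgHom.norm_apply_le
    ((e.symm : Matrix ι ι A →⋆ₙₐ[ℂ] B).comp (singleNonUnitalStarAlgHom ℂ j)) (star x * x)
  rw [← h, CStarRing.norm_star_mul_self, CStarRing.norm_star_mul_self] at h2
  exact (mul_self_le_mul_self_iff (norm_nonneg _) (norm_nonneg _)).mpr h2

lemma norm_symm_le_sum_norm (M : Matrix ι ι A) : ‖e.symm M‖ ≤ ∑ i, ∑ j, ‖M i j‖ := by
  conv_lhs => rw [matrix_eq_sum_single M]
  simp only [map_sum]
  exact (norm_sum_le _ _).trans <| Finset.sum_le_sum fun i _ =>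
    (norm_sum_le _ _).trans <| Finset.sum_le_sum fun j _ => norm_symm_single_le e i j _

lemma norm_symm_diagonal_mul_sub_le (x : A) (a : B) :
    ‖e.symm (diagonal fun _ => x) * a - a * e.symm (diagonal fun _ => x)‖
      ≤ ∑ i, ∑ j, ‖x * e a i j - e a i j * x‖ := by
  calc _ = ‖e.symm ((diagonal fun _ => x) * e a - e a * diagonal fun _ => x)‖ := by
        rw [map_sub, map_mul, map_mul, e.symm_apply_apply]
    _ ≤ _ := (norm_symm_le_sum_norm e _).trans_eq (by simp [diagonal_mul, mul_diagonal])

variable {M : Type*} [AddCommGroup M] [Module ℂ M] {τ : B →ₗ[ℂ] M}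

lemma map_symm_single_eq_zero (htr : ∀ a b, τ (a * b) = τ (b * a)) {i j : ι} (hij : i ≠ j)
    (x : A) : τ (e.symm (single i j x)) = 0 := by
  have h := CStarAlgebra.linearMap_eq_zero_of_map_mul
    (τ ∘ₗ (e.symm : Matrix ι ι A →ₗ[ℂ] B) ∘ₗ singleLinearMap ℂ i j) fun x y => by
      simp only [LinearMap.comp_apply, singleLinearMap_apply, LinearMap.coe_coe]
      rw [← single_mul_single_same x i j j y, map_mul, htr, ← map_mul,
        single_mul_single_of_ne _ _ _ _ hij.symm, map_zero, map_zero]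
  simpa using LinearMap.congr_fun h x

lemma map_symm_eq_sum_diag (htr : ∀ a b, τ (a * b) = τ (b * a)) (N : Matrix ι ι A) :
    τ (e.symm N) = ∑ i, τ (e.symm (single i i (N i i))) := by
  conv_lhs => rw [matrix_eq_sum_single N]
  simp only [map_sum]
  refine Finset.sum_congr rfl fun i _ => Finset.sum_eq_single i (fun j _ hji => ?_) (by simp)
  exact map_symm_single_eq_zero e htr hji.symm _

lemma map_mul_symm_diagonal_sub_smul (htr : ∀ a b, τ (a * b) = τ (b * a)) (x : A) (a : B)
    (c : ℂ) : τ (a * e.symm (diagonal fun _ => x)) - c • τ a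
      = ∑ i, (τ (e.symm (single i i (e a i i * x))) - c • τ (e.symm (single i i (e a i i)))) := by
  have h₁ := map_symm_eq_sum_diag e htr (e a * diagonal fun _ => x)
  have h₂ := map_symm_eq_sum_diag e htr (e a)
  rw [map_mul, e.symm_apply_apply] at h₁
  rw [e.symm_apply_apply] at h₂
  simp only [h₁, h₂, Finset.smul_sum, ← Finset.sum_sub_distrib, mul_diagonal]

lemma IsTracialState.norm_map_mul_symm_diagonal_sub_le {τ : B →L[ℂ] ℂ} (hτ : IsTracialState τ)
    {x : A} {a : B} {c : ℂ} {δ : ℝ} (hδ : 0 < δ)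
    (h : ∀ i, ∀ θ : A →L[ℂ] ℂ, IsTracialState θ → ‖θ (e a i i * x) - c * θ (e a i i)‖ < δ) :
    ‖τ (a * e.symm (diagonal fun _ => x)) - c * τ a‖ ≤ Fintype.card ι * δ := by
  have h₀ := map_mul_symm_diagonal_sub_smul e (τ := (τ : B →ₗ[ℂ] ℂ)) hτ.2.2 x a c
  simp only [smul_eq_mul] at h₀
  calc _ = ‖∑ i, (τ (e.symm (single i i (e a i i * x))) - c * τ (e.symm (single i i (e a i i))))‖ :=
        congrArg norm h₀
    _ ≤ ∑ _i : ι, δ := (norm_sum_le _ _).trans <| Finset.sum_le_sum fun i _ =>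
        (hτ.norm_map_sub_lt ((e.symm : Matrix ι ι A →⋆ₙₐ[ℂ] B).comp
          (singleNonUnitalStarAlgHom ℂ i)) hδ (h i)).le
    _ = Fintype.card ι * δ := by simp

lemma IsUniformGammaFamily.symm_diagonal {N : ℕ} {g : Fin N → A} {F' : Finset A} {δ : ℝ}
    (hδ : 0 < δ) (hg : IsUniformGammaFamily F' δ g) {F : Finset B}
    (hF' : ∀ a ∈ F, ∀ i j, e a i j ∈ F') :
    IsUniformGammaFamily F ((Fintype.card ι * Fintype.card ι + 1) * δ)
      fun l => e.symm (diagonal fun _ => g l) := by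
  obtain ⟨hg_pos, hg_orth, hg⟩ := hg
  have hk : (Fintype.card ι : ℝ) ≤ Fintype.card ι * Fintype.card ι := by
    exact_mod_cast Nat.le_mul_self _
  set k : ℝ := (Fintype.card ι : ℝ)
  have hkkδ : k * (k * δ) < (k * k + 1) * δ := by nlinarith
  let D := (e.symm : Matrix ι ι A →⋆ₙₐ[ℂ] B).comp (diagonalConstNonUnitalStarAlgHom ℂ)
  refine ⟨fun l => ?_, fun l l' hll' => ?_, fun l a ha => ⟨?_, fun τ hτ => ?_⟩⟩
  · obtain ⟨⟨b, hb⟩, hnorm⟩ := hg_pos l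
    exact ⟨⟨D b, show D (g l) = _ by rw [hb, map_mul, map_star]⟩,
      (NonUnitalStarAlgHom.norm_apply_le D _).trans hnorm⟩
  · exact (map_mul D (g l) (g l')).symm.trans (by rw [hg_orth l l' hll', map_zero])
  · calc _ ≤ ∑ i, ∑ j, ‖g l * e a i j - e a i j * g l‖ := norm_symm_diagonal_mul_sub_le e _ a
      _ ≤ ∑ _i : ι, ∑ _j : ι, δ := by
        gcongr with i _ j
        exact (hg l _ (hF' a ha i j)).1.le
      _ = k * (k * δ) := by simp [k]
      _ < _ := hkkδ
  · calc _ ≤ k * δ := hτ.norm_map_mul_symm_diagonal_sub_le e hδ fun i => (hg l _ (hF' a ha i i)).2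
      _ ≤ k * (k * δ) := by nlinarith
      _ < _ := hkkδ

end

/-- `M_k(A)` is modelled as any C*-algebra `MA` that is *-isomorphic to
`Matrix (Fin k) (Fin k) A`; this pins down its norm, since a C*-norm is unique. -/
theorem matrix_uniformPropertyGamma_general
    {A : Type*} [NonUnitalCStarAlgebra A]
    (hΓ : UniformPropertyGamma A)
    (k : ℕ) (MA : Type*) [NonUnitalCStarAlgebra MA]
    (e : MA ≃⋆ₐ[ℂ] Matrix (Fin k) (Fin k) A) :
    UniformPropertyGamma MA := by
  classical
  rw [uniformPropertyGamma_iff] at hΓ ⊢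
  intro F ε hε n hn
  have hF : ∀ a ∈ F, ∀ i j, e a i j ∈ F.biUnion fun a =>
      Finset.image (fun ij : Fin k × Fin k => e a ij.1 ij.2) Finset.univ := fun a ha i j =>
    Finset.mem_biUnion.mpr ⟨a, ha, Finset.mem_image_of_mem _ (Finset.mem_univ (i, j))⟩
  have hδ : 0 < ε / (k * k + 1) := by positivity
  obtain ⟨g, hg⟩ := hΓ _ _ hδ n hn
  have hD := IsUniformGammaFamily.symm_diagonal e hδ hg hF
  rw [Fintype.card_fin, mul_div_cancel₀ ε (by positivity)] at hD
  exact ⟨_, hD⟩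

/-- If `A` is a separable C*-algebra with nonempty weak-*-compact tracial state space
satisfying uniform property Γ, then the C*-algebra `M_k(A)` of `k × k` matrices over `A` also
satisfies uniform property Γ.  Since Mathlib does not carry a C*-norm on matrix algebras over
an abstract C*-algebra, and since the C*-norm on `M_k(A)` is unique, we formalize `M_k(A)`
with its C*-norm as an arbitrary C*-algebra `MA` which is *-isomorphic (as a complex star
algebra) to `Matrix (Fin k) (Fin k) A`. -/
theorem matrix_uniformPropertyGamma
    {A : Type*} [NonUnitalCStarAlgebra A] [TopologicalSpace.SeparableSpace A]
    (htrace : (TracialStateSet A).Nonempty)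
    (hcompact : IsCompact (TracialStateSet A))
    (hΓ : UniformPropertyGamma A)
    (k : ℕ) (MA : Type*) [NonUnitalCStarAlgebra MA]
    (e : MA ≃⋆ₐ[ℂ] Matrix (Fin k) (Fin k) A) :
    UniformPropertyGamma MA :=
  matrix_uniformPropertyGamma_general hΓ k MA e
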